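/- In the high-low Hadamard Response scheme, if X ∼ p over [k] with sensitive set A = [s] and Y is the channel output, then Pr(Y ∈ [S]) = 2/(e^ε+1) + ((e^ε−1)/(e^ε+1))·p(A), and for each i ∈ [s], Pr(Y ∈ S_i) = 1/(e^ε+1) + ((e^ε−1)/(2(e^ε+1)))·p(A) + ((e^ε−1)/(2(e^ε+1)))·p_i, where S_i = {y ∈ [S] : H_S(i+1, y) = +1} and p(A) = Σ_{x∈A} p_x. -/
import Mathlib


/-- Sylvester's construction of Hadamard matrices. -/
def sylvester : (n : ℕ) → Fin (2 ^ n) → Fin (2 ^ n) → ℤ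
  | 0 => fun _ _ => 1
  | n + 1 => fun i j =>
      (if (i : ℕ) < 2 ^ n ∨ (j : ℕ) < 2 ^ n then 1 else -1) *
        sylvester n ⟨(i : ℕ) % 2 ^ n, Nat.mod_lt _ (Nat.two_pow_pos n)⟩
          ⟨(j : ℕ) % 2 ^ n, Nat.mod_lt _ (Nat.two_pow_pos n)⟩

lemma sylvester_pm : ∀ (n : ℕ) (i j : Fin (2 ^ n)), sylvester n i j = 1 ∨ sylvester n i j = -1
  | 0, _, _ => Or.inl rfl
  | n+1, i, j => by
    simp only [sylvester]
    rcases sylvester_pm n ⟨(i:ℕ) % 2^n, Nat.mod_lt _ (Nat.two_pow_pos n)⟩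
      ⟨(j:ℕ) % 2^n, Nat.mod_lt _ (Nat.two_pow_pos n)⟩ with h | h <;> rw [h] <;>
      split <;> simp

lemma sylvester_row_zero : ∀ (n : ℕ) (i j : Fin (2^n)), (i:ℕ) = 0 → sylvester n i j = 1
  | 0, _, _, _ => rfl
  | n+1, i, j, hi => by
    simp only [sylvester]
    rw [if_pos (Or.inl (by rw [hi]; exact Nat.two_pow_pos n)), one_mul]
    exact sylvester_row_zero n _ _ (by simp [hi])

lemma sylvester_succ_low (n : ℕ) (i j : Fin (2^(n+1))) (hj : (j:ℕ) < 2^n) :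
    sylvester (n+1) i j
      = sylvester n ⟨(i:ℕ) % 2^n, Nat.mod_lt _ (Nat.two_pow_pos n)⟩ ⟨(j:ℕ), hj⟩ := by
  simp only [sylvester, Nat.mod_eq_of_lt hj]
  rw [if_pos (Or.inr hj), one_mul]

lemma sylvester_succ_high (n : ℕ) (i j : Fin (2^(n+1))) (hj : ¬ (j:ℕ) < 2^n) :
    sylvester (n+1) i j
      = (if (i:ℕ) < 2^n then 1 else -1) *
        sylvester n ⟨(i:ℕ) % 2^n, Nat.mod_lt _ (Nat.two_pow_pos n)⟩
          ⟨(j:ℕ) % 2^n, Nat.mod_lt _ (Nat.two_pow_pos n)⟩ := by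
  simp only [sylvester, hj, or_false]

lemma val_decomp (n : ℕ) (i : Fin (2^(n+1))) :
    (i:ℕ) = (if (i:ℕ) < 2^n then 0 else 2^n) + (i:ℕ) % 2^n := by
  by_cases h : (i:ℕ) < 2^n
  · rw [if_pos h, Nat.mod_eq_of_lt h, zero_add]
  · have h2 : (i:ℕ) = 2^n + ((i:ℕ) - 2^n) := by omega
    have hm : (i:ℕ) % 2^n = (i:ℕ) - 2^n := by
      conv_lhs => rw [h2]
      rw [Nat.add_mod_left]
      refine Nat.mod_eq_of_lt ?_
      have h3 := i.isLt
      have h4 : 2^(n+1) = 2^n + 2^n := by rw [pow_succ]; ring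
      omega
    rw [if_neg h, hm]; omega

lemma sylvester_ortho : ∀ (n : ℕ) (r r' : Fin (2^n)),
    ∑ j, sylvester n r j * sylvester n r' j = if r = r' then (2^n : ℤ) else 0
  | 0, r, r' => by
    have hrr : r = r' := by
      apply Fin.ext
      have h1 := r.isLt; have h2 := r'.isLt
      simp only [pow_zero] at h1 h2; omega
    subst hrr
    simp [sylvester]
  | n+1, r, r' => by
    have hpow : 2^n + 2^n = 2^(n+1) := by rw [pow_succ]; ring
    set lr : Fin (2^n) := ⟨(r:ℕ) % 2^n, Nat.mod_lt _ (Nat.two_pow_pos n)⟩ with hlr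
    set lr' : Fin (2^n) := ⟨(r':ℕ) % 2^n, Nat.mod_lt _ (Nat.two_pow_pos n)⟩ with hlr'
    have hsum := (Equiv.sum_comp (finCongr hpow)
      (fun j => sylvester (n+1) r j * sylvester (n+1) r' j)).symm
    rw [hsum, Fin.sum_univ_add]
    have hprod_low : ∀ (j : Fin (2^(n+1))) (u : Fin (2^n)), (j:ℕ) = (u:ℕ) →
        sylvester (n+1) r j * sylvester (n+1) r' j = sylvester n lr u * sylvester n lr' u := by
      intro j u hju
      have hlt : (j:ℕ) < 2^n := by rw [hju]; exact u.isLt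
      rw [sylvester_succ_low n r _ hlt, sylvester_succ_low n r' _ hlt]
      have : (⟨(j:ℕ), hlt⟩ : Fin (2^n)) = u := by simp [Fin.ext_iff, hju]
      rw [this]
    have hprod_high : ∀ (j : Fin (2^(n+1))) (u : Fin (2^n)), (j:ℕ) = 2^n + (u:ℕ) →
        sylvester (n+1) r j * sylvester (n+1) r' j
          = ((if (r:ℕ) < 2^n then 1 else -1) * (if (r':ℕ) < 2^n then 1 else -1)) *
            (sylvester n lr u * sylvester n lr' u) := by
      intro j u hju
      have hlt : ¬ (j:ℕ) < 2^n := by omega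
      have hm : (⟨(j:ℕ) % 2^n, Nat.mod_lt _ (Nat.two_pow_pos n)⟩ : Fin (2^n)) = u := by
        simp [Fin.ext_iff, hju, Nat.add_mod_left, Nat.mod_eq_of_lt u.isLt]
      rw [sylvester_succ_high n r _ hlt, sylvester_succ_high n r' _ hlt, hm]
      ring
    rw [Finset.sum_congr rfl (fun u _ => hprod_low _ u (by simp)),
      Finset.sum_congr rfl (fun u _ => hprod_high _ u (by simp [Nat.add_comm])),
      ← Finset.mul_sum, sylvester_ortho n lr lr']
    have hdr := val_decomp n r
    have hdr' := val_decomp n r'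
    by_cases hll : lr = lr'
    · have hmm : (r:ℕ) % 2^n = (r':ℕ) % 2^n := by
        have := congrArg Fin.val hll; simpa [hlr, hlr'] using this
      by_cases hb : ((r:ℕ) < 2^n) ↔ ((r':ℕ) < 2^n)
      · have hrr : r = r' := by
          apply Fin.ext
          rw [hdr, hdr', hmm]
          by_cases h1 : (r:ℕ) < 2^n
          · rw [if_pos h1, if_pos (hb.mp h1)]
          · rw [if_neg h1, if_neg (fun h => h1 (hb.mpr h))]
        rw [if_pos hll, if_pos hrr]
        by_cases h1 : (r:ℕ) < 2^n
        · rw [if_pos h1, if_pos (hb.mp h1), pow_succ]; ring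
        · rw [if_neg h1, if_neg (fun h => h1 (hb.mpr h)), pow_succ]; ring
      · have hne : r ≠ r' := by
          intro h; exact hb (by rw [h])
        rw [if_pos hll, if_neg hne]
        by_cases h1 : (r:ℕ) < 2^n
        · have h2 : ¬ (r':ℕ) < 2^n := fun h => hb ⟨fun _ => h, fun _ => h1⟩
          rw [if_pos h1, if_neg h2]; ring
        · have h2 : (r':ℕ) < 2^n := by
            by_contra h2; exact hb ⟨fun h => absurd h h1, fun h => absurd h h2⟩
          rw [if_neg h1, if_pos h2]; ring
    · have hne : r ≠ r' := by
        intro h; exact hll (by rw [hlr, hlr', h])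
      rw [if_neg hll, if_neg hne]; ring

lemma sylvester_row_sum (n : ℕ) (r : Fin (2^n)) :
    ∑ j, sylvester n r j = if (r:ℕ) = 0 then (2^n : ℤ) else 0 := by
  have h0 : ∀ j, sylvester n ⟨0, Nat.two_pow_pos n⟩ j = 1 :=
    fun j => sylvester_row_zero n _ j rfl
  have h := sylvester_ortho n r ⟨0, Nat.two_pow_pos n⟩
  simp only [h0, mul_one, Fin.ext_iff] at h
  exact h
/-- The high-low Hadamard-response channel. -/
noncomputable def hlChannel (s t : ℕ) (ε : ℝ)
    (x : Fin (s + t)) (y : Fin (2 ^ Nat.clog 2 (s + 1) + t)) : ℝ :=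
  if hx : (x : ℕ) < s then
    if hy : (y : ℕ) < 2 ^ Nat.clog 2 (s + 1) then
      if sylvester (Nat.clog 2 (s + 1))
          ⟨(x : ℕ) + 1, by
            have := Nat.le_pow_clog (b := 2) (by norm_num) (s + 1); omega⟩
          ⟨(y : ℕ), hy⟩ = 1 then
        2 * Real.exp ε / ((2 ^ Nat.clog 2 (s + 1) : ℝ) * (Real.exp ε + 1))
      else
        2 / ((2 ^ Nat.clog 2 (s + 1) : ℝ) * (Real.exp ε + 1))
    else 0
  else
    if (y : ℕ) < 2 ^ Nat.clog 2 (s + 1) then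
      2 / ((2 ^ Nat.clog 2 (s + 1) : ℝ) * (Real.exp ε + 1))
    else if (y : ℕ) = (x : ℕ) + 2 ^ Nat.clog 2 (s + 1) - s then
      (Real.exp ε - 1) / (Real.exp ε + 1)
    else 0

/-- Output-event probabilities of the high-low Hadamard response scheme:
`Pr(Y ∈ [S]) = 2/(e^ε+1) + ((e^ε-1)/(e^ε+1)) p(A)` and for every sensitive `i`,
`Pr(Y ∈ S_i) = 1/(e^ε+1) + ((e^ε-1)/(2(e^ε+1))) p(A) + ((e^ε-1)/(2(e^ε+1))) p_i`,
where `S_i` is the `+1` set of Hadamard row `i+1` and `p(A)` is the total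
sensitive mass. -/
theorem hlChannel_output_probs (s t : ℕ) (hs : 0 < s) (ht : 0 < t)
    (ε : ℝ) (hε : 0 < ε)
    (p : Fin (s + t) → ℝ) (hp0 : ∀ x, 0 ≤ p x) (hp1 : ∑ x, p x = 1) :
    (∑ y ∈ Finset.univ.filter
        (fun y : Fin (2 ^ Nat.clog 2 (s + 1) + t) => (y : ℕ) < 2 ^ Nat.clog 2 (s + 1)),
        ∑ x, p x * hlChannel s t ε x y)
      = 2 / (Real.exp ε + 1) + (Real.exp ε - 1) / (Real.exp ε + 1) *
          (∑ x ∈ Finset.univ.filter (fun x : Fin (s + t) => (x : ℕ) < s), p x) ∧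
    ∀ (i : Fin (s + t)) (hi : (i : ℕ) < s),
      (∑ u ∈ Finset.univ.filter (fun u : Fin (2 ^ Nat.clog 2 (s + 1)) =>
            sylvester (Nat.clog 2 (s + 1))
              ⟨(i : ℕ) + 1, by
                have := Nat.le_pow_clog (b := 2) (by norm_num) (s + 1); omega⟩ u = 1),
          ∑ x, p x * hlChannel s t ε x ⟨(u : ℕ), by have := u.isLt; omega⟩)
        = 1 / (Real.exp ε + 1)
          + (Real.exp ε - 1) / (2 * (Real.exp ε + 1)) *
              (∑ x ∈ Finset.univ.filter (fun x : Fin (s + t) => (x : ℕ) < s), p x)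
          + (Real.exp ε - 1) / (2 * (Real.exp ε + 1)) * p i := by
  set N := Nat.clog 2 (s + 1) with hNdef
  have hsS : s + 1 ≤ 2 ^ N := Nat.le_pow_clog one_lt_two (s + 1)
  have hSR : (0:ℝ) < ((2:ℝ) ^ N) := by positivity
  have hEpos : (0:ℝ) < Real.exp ε := Real.exp_pos ε
  have hE1 : (0:ℝ) < Real.exp ε + 1 := by positivity
  have hE1' : Real.exp ε + 1 ≠ 0 := ne_of_gt hE1
  have hSR' : ((2:ℝ) ^ N) ≠ 0 := ne_of_gt hSR
  -- real-valued sylvester facts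
  have horthoR : ∀ (r r' : Fin (2^N)),
      (∑ j, ((sylvester N r j : ℝ) * (sylvester N r' j : ℝ)))
        = if r = r' then ((2:ℝ)^N) else 0 := by
    intro r r'
    have h := sylvester_ortho N r r'
    have hc : (∑ j, ((sylvester N r j : ℝ) * (sylvester N r' j : ℝ)))
        = ((∑ j, sylvester N r j * sylvester N r' j : ℤ) : ℝ) := by push_cast; rfl
    rw [hc, h]; split <;> push_cast <;> norm_num
  have hrowR : ∀ (r : Fin (2^N)), (r:ℕ) ≠ 0 → (∑ j, ((sylvester N r j : ℝ))) = 0 := by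
    intro r hr
    have h := sylvester_row_sum N r
    rw [if_neg hr] at h
    have hc : (∑ j, ((sylvester N r j : ℝ))) = ((∑ j, sylvester N r j : ℤ) : ℝ) := by
      push_cast; rfl
    rw [hc, h]; norm_num
  -- row index for a sensitive x
  have hrowlt : ∀ (x : Fin (s+t)), (x:ℕ) < s → (x:ℕ) + 1 < 2^N := by
    intro x hx; omega
  -- channel values
  have hQlow : ∀ (x : Fin (s+t)) (hx : (x:ℕ) < s) (y : Fin (2^N + t)) (hy : (y:ℕ) < 2^N),
      hlChannel s t ε x y =
        (2 * Real.exp ε / ((2:ℝ)^N * (Real.exp ε + 1))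
          + 2 / ((2:ℝ)^N * (Real.exp ε + 1))) / 2
        + (2 * Real.exp ε / ((2:ℝ)^N * (Real.exp ε + 1))
          - 2 / ((2:ℝ)^N * (Real.exp ε + 1))) / 2
          * ((sylvester N ⟨(x:ℕ)+1, hrowlt x hx⟩ ⟨(y:ℕ), hy⟩ : ℤ) : ℝ) := by
    intro x hx y hy
    simp only [hlChannel]
    rw [dif_pos hx, dif_pos hy]
    rcases sylvester_pm N ⟨(x:ℕ)+1, hrowlt x hx⟩ ⟨(y:ℕ), hy⟩ with h | h <;> rw [h]
    · rw [if_pos rfl]; push_cast; ring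
    · rw [if_neg (by norm_num)]; push_cast; ring
  have hQhigh : ∀ (x : Fin (s+t)), ¬ (x:ℕ) < s → ∀ (y : Fin (2^N + t)), (y:ℕ) < 2^N →
      hlChannel s t ε x y = 2 / ((2:ℝ)^N * (Real.exp ε + 1)) := by
    intro x hx y hy
    simp only [hlChannel]
    rw [dif_neg hx, if_pos hy]
  constructor
  · -- Part 1
    rw [Finset.sum_filter, Fin.sum_univ_add]
    have hR : (∑ v : Fin t,
        if (((Fin.natAdd (2^N) v) : Fin (2^N + t)) : ℕ) < 2^N then
          (∑ x, p x * hlChannel s t ε x (Fin.natAdd (2^N) v)) else 0) = 0 := by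
      apply Finset.sum_eq_zero; intro v _
      rw [if_neg]
      simp only [Fin.coe_natAdd]
      omega
    rw [hR, add_zero]
    have hL : ∀ u : Fin (2^N),
        (if (((Fin.castAdd t u) : Fin (2^N + t)) : ℕ) < 2^N then
          (∑ x, p x * hlChannel s t ε x (Fin.castAdd t u)) else 0)
        = ∑ x, p x * hlChannel s t ε x (Fin.castAdd t u) := by
      intro u; rw [if_pos]; exact u.isLt
    rw [Finset.sum_congr rfl (fun u _ => hL u), Finset.sum_comm]
    have hxsum : ∀ x : Fin (s+t),
        (∑ u : Fin (2^N), p x * hlChannel s t ε x (Fin.castAdd t u))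
          = p x * (if (x:ℕ) < s then 1 else 2 / (Real.exp ε + 1)) := by
      intro x
      rw [← Finset.mul_sum]
      congr 1
      by_cases hxs : (x:ℕ) < s
      · rw [if_pos hxs,
          Finset.sum_congr rfl (fun u _ => hQlow x hxs (Fin.castAdd t u) u.isLt)]
        have hmk : ∀ u : Fin (2^N),
            (⟨(((Fin.castAdd t u) : Fin (2^N + t)) : ℕ), u.isLt⟩ : Fin (2^N)) = u :=
          fun u => rfl
        rw [Finset.sum_add_distrib, Finset.sum_const, ← Finset.mul_sum]
        rw [Finset.sum_congr rfl (fun u _ => by rw [hmk u]),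
          hrowR ⟨(x:ℕ)+1, hrowlt x hxs⟩ (by simp)]
        simp only [Finset.card_univ, Fintype.card_fin, nsmul_eq_mul]
        push_cast
        field_simp
        ring
      · rw [if_neg hxs,
          Finset.sum_congr rfl (fun u _ => hQhigh x hxs (Fin.castAdd t u) u.isLt),
          Finset.sum_const]
        simp only [Finset.card_univ, Fintype.card_fin, nsmul_eq_mul]
        push_cast
        field_simp
    rw [Finset.sum_congr rfl (fun x _ => hxsum x)]
    rw [← Finset.sum_filter_add_sum_filter_not Finset.univ (fun x : Fin (s+t) => (x:ℕ) < s)]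
    have h1 : (∑ x ∈ Finset.univ.filter (fun x : Fin (s+t) => (x:ℕ) < s),
        p x * (if (x:ℕ) < s then 1 else 2 / (Real.exp ε + 1)))
        = ∑ x ∈ Finset.univ.filter (fun x : Fin (s+t) => (x:ℕ) < s), p x := by
      apply Finset.sum_congr rfl; intro x hx
      rw [if_pos (Finset.mem_filter.mp hx).2, mul_one]
    have h2 : (∑ x ∈ Finset.univ.filter (fun x : Fin (s+t) => ¬ (x:ℕ) < s),
        p x * (if (x:ℕ) < s then 1 else 2 / (Real.exp ε + 1)))
        = (∑ x ∈ Finset.univ.filter (fun x : Fin (s+t) => ¬ (x:ℕ) < s), p x)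
            * (2 / (Real.exp ε + 1)) := by
      rw [Finset.sum_mul]
      apply Finset.sum_congr rfl; intro x hx
      rw [if_neg (Finset.mem_filter.mp hx).2]
    rw [h1, h2]
    have hsplit := Finset.sum_filter_add_sum_filter_not Finset.univ
      (fun x : Fin (s+t) => (x:ℕ) < s) p
    rw [hp1] at hsplit
    set pA := ∑ x ∈ Finset.univ.filter (fun x : Fin (s+t) => (x:ℕ) < s), p x with hpA
    have hB : (∑ x ∈ Finset.univ.filter (fun x : Fin (s+t) => ¬ (x:ℕ) < s), p x)
        = 1 - pA := by rw [← hsplit]; ring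
    rw [hB]
    field_simp
    ring
  · -- Part 2
    intro i hi
    rw [Finset.sum_filter]
    set ri : Fin (2^N) := ⟨(i:ℕ)+1, hrowlt i hi⟩ with hri
    have hriz : (ri:ℕ) ≠ 0 := by simp [hri]
    have hindpm := fun u => sylvester_pm N ri u
    have hind : ∀ (u : Fin (2^N)) (v : ℝ),
        (if sylvester N ri u = 1 then v else 0)
          = (1 + ((sylvester N ri u : ℤ) : ℝ)) / 2 * v := by
      intro u v
      rcases hindpm u with h | h <;> rw [h]
      · rw [if_pos rfl]; push_cast; ring
      · rw [if_neg (by norm_num)]; push_cast; ring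
    have hcond : ∀ u : Fin (2^N),
        (if sylvester N ⟨(i:ℕ)+1, by
            have := Nat.le_pow_clog (b := 2) (by norm_num) (s + 1); omega⟩ u = 1 then
          (∑ x, p x * hlChannel s t ε x ⟨(u:ℕ), Nat.lt_of_lt_of_le u.isLt (Nat.le_add_right _ _)⟩) else 0)
        = ∑ x, (1 + ((sylvester N ri u : ℤ) : ℝ)) / 2 *
            (p x * hlChannel s t ε x ⟨(u:ℕ), Nat.lt_of_lt_of_le u.isLt (Nat.le_add_right _ _)⟩) := by
      intro u
      rw [show (⟨(i:ℕ)+1, by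
            have := Nat.le_pow_clog (b := 2) (by norm_num) (s + 1); omega⟩ : Fin (2^N)) = ri
          from rfl]
      rw [hind u _, Finset.mul_sum]
    rw [Finset.sum_congr rfl (fun u _ => hcond u), Finset.sum_comm]
    have hysum : ∀ x : Fin (s+t),
        (∑ u : Fin (2^N), (1 + ((sylvester N ri u : ℤ) : ℝ)) / 2 *
            (p x * hlChannel s t ε x ⟨(u:ℕ), Nat.lt_of_lt_of_le u.isLt (Nat.le_add_right _ _)⟩))
        = p x * (if (x:ℕ) < s then
            (1/2 + (if x = i then (Real.exp ε - 1)/(2*(Real.exp ε + 1)) else 0))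
          else 1 / (Real.exp ε + 1)) := by
      intro x
      by_cases hxs : (x:ℕ) < s
      · rw [if_pos hxs]
        set rx : Fin (2^N) := ⟨(x:ℕ)+1, hrowlt x hxs⟩ with hrx
        have hval : ∀ u : Fin (2^N),
            (1 + ((sylvester N ri u : ℤ) : ℝ)) / 2 *
              (p x * hlChannel s t ε x ⟨(u:ℕ), Nat.lt_of_lt_of_le u.isLt (Nat.le_add_right _ _)⟩)
            = p x * ((2 * Real.exp ε / ((2:ℝ)^N * (Real.exp ε + 1))
                  + 2 / ((2:ℝ)^N * (Real.exp ε + 1))) / 4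
                + ((2 * Real.exp ε / ((2:ℝ)^N * (Real.exp ε + 1))
                  + 2 / ((2:ℝ)^N * (Real.exp ε + 1))) / 4)
                    * ((sylvester N ri u : ℤ) : ℝ)
                + ((2 * Real.exp ε / ((2:ℝ)^N * (Real.exp ε + 1))
                  - 2 / ((2:ℝ)^N * (Real.exp ε + 1))) / 4)
                    * ((sylvester N rx u : ℤ) : ℝ)
                + ((2 * Real.exp ε / ((2:ℝ)^N * (Real.exp ε + 1))
                  - 2 / ((2:ℝ)^N * (Real.exp ε + 1))) / 4)
                    * (((sylvester N ri u : ℤ) : ℝ) * ((sylvester N rx u : ℤ) : ℝ))) := by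
          intro u
          rw [hQlow x hxs ⟨(u:ℕ), Nat.lt_of_lt_of_le u.isLt (Nat.le_add_right _ _)⟩ u.isLt]
          rw [show (⟨((⟨(u:ℕ), Nat.lt_of_lt_of_le u.isLt (Nat.le_add_right _ _)⟩ : Fin (2^N + t)) : ℕ), u.isLt⟩
              : Fin (2^N)) = u from rfl]
          ring
        rw [Finset.sum_congr rfl (fun u _ => hval u)]
        rw [← Finset.mul_sum]
        congr 1
        rw [Finset.sum_add_distrib, Finset.sum_add_distrib, Finset.sum_add_distrib,
          Finset.sum_const, ← Finset.mul_sum, ← Finset.mul_sum, ← Finset.mul_sum,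
          hrowR ri hriz, hrowR rx (by simp [hrx]), horthoR ri rx]
        simp only [Finset.card_univ, Fintype.card_fin, nsmul_eq_mul]
        have hiff : (ri = rx) ↔ (x = i) := by
          constructor
          · intro h
            apply Fin.ext
            have := congrArg Fin.val h
            simp only [hri, hrx] at this
            omega
          · intro h; subst h; rfl
        by_cases hxi : x = i
        · rw [if_pos (hiff.mpr hxi), if_pos hxi]
          push_cast
          field_simp
          ring
        · rw [if_neg (fun h => hxi (hiff.mp h)), if_neg hxi]
          push_cast
          field_simp
          ring
      · rw [if_neg hxs]
        have hval : ∀ u : Fin (2^N),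
            (1 + ((sylvester N ri u : ℤ) : ℝ)) / 2 *
              (p x * hlChannel s t ε x ⟨(u:ℕ), Nat.lt_of_lt_of_le u.isLt (Nat.le_add_right _ _)⟩)
            = p x * ((2 / ((2:ℝ)^N * (Real.exp ε + 1))) / 2
                + ((2 / ((2:ℝ)^N * (Real.exp ε + 1))) / 2)
                    * ((sylvester N ri u : ℤ) : ℝ)) := by
          intro u
          rw [hQhigh x hxs ⟨(u:ℕ), Nat.lt_of_lt_of_le u.isLt (Nat.le_add_right _ _)⟩ u.isLt]
          ring
        rw [Finset.sum_congr rfl (fun u _ => hval u), ← Finset.mul_sum]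
        congr 1
        rw [Finset.sum_add_distrib, Finset.sum_const, ← Finset.mul_sum, hrowR ri hriz]
        simp only [Finset.card_univ, Fintype.card_fin, nsmul_eq_mul]
        push_cast
        field_simp
        ring
    rw [Finset.sum_congr rfl (fun x _ => hysum x)]
    rw [← Finset.sum_filter_add_sum_filter_not Finset.univ (fun x : Fin (s+t) => (x:ℕ) < s)]
    have h1 : (∑ x ∈ Finset.univ.filter (fun x : Fin (s+t) => (x:ℕ) < s),
        p x * (if (x:ℕ) < s then
            (1/2 + (if x = i then (Real.exp ε - 1)/(2*(Real.exp ε + 1)) else 0))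
          else 1 / (Real.exp ε + 1)))
        = (∑ x ∈ Finset.univ.filter (fun x : Fin (s+t) => (x:ℕ) < s), p x) * (1/2)
          + p i * ((Real.exp ε - 1)/(2*(Real.exp ε + 1))) := by
      have hstep : ∀ x ∈ Finset.univ.filter (fun x : Fin (s+t) => (x:ℕ) < s),
          p x * (if (x:ℕ) < s then
              (1/2 + (if x = i then (Real.exp ε - 1)/(2*(Real.exp ε + 1)) else 0))
            else 1 / (Real.exp ε + 1))
          = p x * (1/2) + (if x = i then p x * ((Real.exp ε - 1)/(2*(Real.exp ε + 1))) else 0) := by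
        intro x hx
        rw [if_pos (Finset.mem_filter.mp hx).2]
        by_cases hxi : x = i
        · rw [if_pos hxi, if_pos hxi]; ring
        · rw [if_neg hxi, if_neg hxi]; ring
      rw [Finset.sum_congr rfl hstep, Finset.sum_add_distrib, ← Finset.sum_mul,
        Finset.sum_ite_eq' _ i (fun x => p x * ((Real.exp ε - 1)/(2*(Real.exp ε + 1)))),
        if_pos (Finset.mem_filter.mpr ⟨Finset.mem_univ i, hi⟩)]
    have h2 : (∑ x ∈ Finset.univ.filter (fun x : Fin (s+t) => ¬ (x:ℕ) < s),
        p x * (if (x:ℕ) < s then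
            (1/2 + (if x = i then (Real.exp ε - 1)/(2*(Real.exp ε + 1)) else 0))
          else 1 / (Real.exp ε + 1)))
        = (∑ x ∈ Finset.univ.filter (fun x : Fin (s+t) => ¬ (x:ℕ) < s), p x)
            * (1 / (Real.exp ε + 1)) := by
      rw [Finset.sum_mul]
      apply Finset.sum_congr rfl; intro x hx
      rw [if_neg (Finset.mem_filter.mp hx).2]
    rw [h1, h2]
    have hsplit := Finset.sum_filter_add_sum_filter_not Finset.univ
      (fun x : Fin (s+t) => (x:ℕ) < s) p
    rw [hp1] at hsplit
    set pA := ∑ x ∈ Finset.univ.filter (fun x : Fin (s+t) => (x:ℕ) < s), p x with hpA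
    have hB : (∑ x ∈ Finset.univ.filter (fun x : Fin (s+t) => ¬ (x:ℕ) < s), p x)
        = 1 - pA := by rw [← hsplit]; ring
    rw [hB]
    field_simp
    ring
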